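/- arXiv:2405.14069 — 2 statements merged into one kernel-verified Lean document; each statement's English description precedes it below -/
import Mathlib

section
/- Let ρ₁, ρ₂, ρ₃ be density matrices satisfying the hypotheses of the Goerz–Reich–Koch theorem. Then the functional J_U^{GRK,sd}(Φ) = (1/6)·Σ_{m=1}^3 ‖Φρ_m − Uρ_m U†‖², where ‖·‖ is the Hilbert–Schmidt norm, satisfies: J_U^{GRK,sd}(Φ) ≥ 0 for all quantum channels Φ, and J_U^{GRK,sd}(Φ) = 0 if and only if Φ = Φ_U. -/
/-!
Conjugating by `U†` and by the unitary whose columns are the `φ n` turns `Φ` into a channel `Ψ`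
fixing `1`, `diag λ` and a matrix `R` without zero entries: `R k l = ⟪ρ₂ φ k, ρ₂ φ l⟫`, and the
range of `ρ₂` is a line. The diagonal `p k i = Ψ(E_ii)_kk` of the Choi matrix of `Ψ` is doubly
stochastic (trace preservation and unitality) and fixes `λ`, so `∑ p k i (λ_k - λ_i)² = 0` and
`p k i = 0` for `k ≠ i` because the `λ_i` are distinct. A positive semidefinite matrix vanishes on
the row and column of a zero diagonal entry, hence `Ψ(E_ij) = c_ij E_ij`, i.e. `Ψ` is the Schur
multiplier `X ↦ c ⊙ X`, and `Ψ R = R` forces `c = 1`.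
-/

open Matrix
open scoped ComplexOrder

noncomputable def extMap (N k : ℕ)
    (Φ : Matrix (Fin N) (Fin N) ℂ → Matrix (Fin N) (Fin N) ℂ)
    (A : Matrix (Fin N × Fin k) (Fin N × Fin k) ℂ) :
    Matrix (Fin N × Fin k) (Fin N × Fin k) ℂ :=
  Matrix.of fun p q => Φ (Matrix.of fun i j => A (i, p.2) (j, q.2)) p.1 q.1

def CompletelyPositive (N : ℕ)
    (Φ : Matrix (Fin N) (Fin N) ℂ → Matrix (Fin N) (Fin N) ℂ) : Prop :=
  ∀ k : ℕ, ∀ A : Matrix (Fin N × Fin k) (Fin N × Fin k) ℂ,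
    A.PosSemidef → (extMap N k Φ A).PosSemidef

/-- The channel `ρ ↦ U ρ U†` as a linear map on matrices. -/
noncomputable def conjChan (N : ℕ) (U : Matrix (Fin N) (Fin N) ℂ) :
    Matrix (Fin N) (Fin N) ℂ →ₗ[ℂ] Matrix (Fin N) (Fin N) ℂ where
  toFun ρ := U * ρ * Uᴴ
  map_add' ρ σ := by simp only [Matrix.mul_add, Matrix.add_mul]
  map_smul' a ρ := by simp [Matrix.mul_smul, Matrix.smul_mul]

/-- Squared Hilbert–Schmidt norm of a matrix. -/
noncomputable def matHSnormSq {N : ℕ} (A : Matrix (Fin N) (Fin N) ℂ) : ℝ :=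
  ∑ a, ∑ b, Complex.normSq (A a b)

open scoped Kronecker

namespace Matrix

variable {n : Type*} [Fintype n]

section RCLike

variable {𝕜 : Type*} [RCLike 𝕜] {A : Matrix n n 𝕜}

lemma PosSemidef.apply_eq_zero_of_apply_self_eq_zero (hA : A.PosSemidef) {i : n}
    (hi : A i i = 0) (j : n) : A j i = 0 := by
  classical
  have hquad : star (Pi.single i 1) ⬝ᵥ A *ᵥ Pi.single i 1 = 0 := by
    simpa [mulVec_single] using hi
  simpa [mulVec_single] using congrFun ((hA.dotProduct_mulVec_zero_iff _).mp hquad) j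

lemma PosSemidef.apply_eq_zero_of_apply_self_eq_zero' (hA : A.PosSemidef) {i : n}
    (hi : A i i = 0) (j : n) : A i j = 0 := by
  rw [← hA.isHermitian.apply i j, hA.apply_eq_zero_of_apply_self_eq_zero hi, star_zero]

lemma star_dotProduct_ne_zero_of_finrank_eq_one {S : Submodule 𝕜 (n → 𝕜)}
    (hS : Module.finrank 𝕜 S = 1) {x y : n → 𝕜} (hx : x ∈ S) (hy : y ∈ S) (hx0 : x ≠ 0)
    (hy0 : y ≠ 0) : star x ⬝ᵥ y ≠ 0 := by
  obtain ⟨c, hc⟩ :=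
    (finrank_eq_one_iff_of_nonzero' (⟨x, hx⟩ : S) (by simpa using hx0)).mp hS ⟨y, hy⟩
  have hy' : y = c • x := by simpa using congrArg Subtype.val hc.symm
  have hc0 : c ≠ 0 := by rintro rfl; simp_all
  rw [hy', dotProduct_smul, smul_eq_mul]
  exact mul_ne_zero hc0 (dotProduct_star_self_eq_zero.not.mpr hx0)

lemma IsHermitian.star_dotProduct_mulVec_ne_zero_of_rank_eq_one (hA : A.IsHermitian)
    (hAA : A * A = A) (hrank : A.rank = 1) {v w : n → 𝕜} (hv : A *ᵥ v ≠ 0)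
    (hw : A *ᵥ w ≠ 0) : star v ⬝ᵥ A *ᵥ w ≠ 0 := by
  have hcomp : star v ⬝ᵥ A *ᵥ w = star (A *ᵥ v) ⬝ᵥ A *ᵥ w := by
    rw [star_mulVec, ← dotProduct_mulVec, hA.eq, mulVec_mulVec, hAA]
  rw [hcomp]
  exact star_dotProduct_ne_zero_of_finrank_eq_one hrank ⟨v, rfl⟩ ⟨w, rfl⟩ hv hw

end RCLike

lemma doublyStochastic_apply_eq_zero_of_mulVec_eq [DecidableEq n] {R : Type*} [CommRing R]
    [LinearOrder R] [IsStrictOrderedRing R] {P : Matrix n n R} (hP : P ∈ doublyStochastic R n)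
    {v : n → R} (hv : P *ᵥ v = v) {i j : n} (hij : v i ≠ v j) : P i j = 0 := by
  obtain ⟨hnn, hrow, hcol⟩ := mem_doublyStochastic_iff_sum.mp hP
  have hfix : ∀ i, ∑ j, P i j * v j = v i := fun i => by
    simpa [mulVec, dotProduct] using congrFun hv i
  have hterm_nonneg : ∀ i j, 0 ≤ P i j * (v i - v j) ^ 2 := fun i j =>
    mul_nonneg (hnn i j) (sq_nonneg _)
  have hsum : ∑ i, ∑ j, P i j * (v i - v j) ^ 2 = 0 := by
    calc ∑ i, ∑ j, P i j * (v i - v j) ^ 2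
        = ∑ i, (v i ^ 2 * ∑ j, P i j - 2 * (v i * ∑ j, P i j * v j) + ∑ j, P i j * v j ^ 2) := by
          refine Finset.sum_congr rfl fun i _ => ?_
          simp only [Finset.mul_sum, ← Finset.sum_sub_distrib, ← Finset.sum_add_distrib]
          exact Finset.sum_congr rfl fun j _ => by ring
      _ = ∑ i, (v i ^ 2 - 2 * v i ^ 2) + ∑ j, ∑ i, P i j * v j ^ 2 := by
          rw [Finset.sum_comm (f := fun j i => P i j * v j ^ 2), ← Finset.sum_add_distrib]
          exact Finset.sum_congr rfl fun i _ => by rw [hrow, hfix]; ring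
      _ = 0 := by
          simp only [← Finset.sum_mul, hcol, one_mul, ← Finset.sum_add_distrib]
          exact Finset.sum_eq_zero fun i _ => by ring
  have := (Finset.sum_eq_zero_iff_of_nonneg fun j _ => hterm_nonneg i j).mp
    ((Finset.sum_eq_zero_iff_of_nonneg fun i _ => Finset.sum_nonneg fun j _ =>
      hterm_nonneg i j).mp hsum i (Finset.mem_univ i)) j (Finset.mem_univ j)
  exact (mul_eq_zero.mp this).resolve_right (pow_ne_zero 2 (sub_ne_zero.mpr hij))

lemma submatrix_kronecker_one_mul_mul {α l m κ : Type*} [CommSemiring α] [Fintype m]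
    [Fintype κ] [DecidableEq κ] (K : Matrix l m α) (A : Matrix (m × κ) (m × κ) α)
    (L : Matrix m l α) (s t : κ) :
    ((K ⊗ₖ (1 : Matrix κ κ α)) * A * (L ⊗ₖ (1 : Matrix κ κ α))).submatrix (·, s) (·, t) =
      K * A.submatrix (·, s) (·, t) * L := by
  ext i j
  simp [mul_apply, Fintype.sum_prod_type, one_apply, Finset.sum_mul]

end Matrix

variable {N : ℕ}

lemma extMap_apply (k : ℕ) (Φ : Matrix (Fin N) (Fin N) ℂ → Matrix (Fin N) (Fin N) ℂ)
    (A : Matrix (Fin N × Fin k) (Fin N × Fin k) ℂ) (p q : Fin N × Fin k) :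
    extMap N k Φ A p q = Φ (A.submatrix (·, p.2) (·, q.2)) p.1 q.1 :=
  rfl

lemma conjChan_apply (U ρ : Matrix (Fin N) (Fin N) ℂ) : conjChan N U ρ = U * ρ * Uᴴ :=
  rfl

lemma extMap_conjChan_comp (k : ℕ) (U : Matrix (Fin N) (Fin N) ℂ)
    (Φ : Matrix (Fin N) (Fin N) ℂ → Matrix (Fin N) (Fin N) ℂ)
    (A : Matrix (Fin N × Fin k) (Fin N × Fin k) ℂ) :
    extMap N k (conjChan N U ∘ Φ) A = (U ⊗ₖ 1) * extMap N k Φ A * (U ⊗ₖ 1)ᴴ := by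
  ext p q
  rw [conjTranspose_kronecker, conjTranspose_one]
  exact congrFun₂ (submatrix_kronecker_one_mul_mul U (extMap N k Φ A) Uᴴ p.2 q.2).symm p.1 q.1

lemma extMap_comp_conjChan (k : ℕ) (U : Matrix (Fin N) (Fin N) ℂ)
    (Φ : Matrix (Fin N) (Fin N) ℂ → Matrix (Fin N) (Fin N) ℂ)
    (A : Matrix (Fin N × Fin k) (Fin N × Fin k) ℂ) :
    extMap N k (Φ ∘ conjChan N U) A = extMap N k Φ ((U ⊗ₖ 1) * A * (U ⊗ₖ 1)ᴴ) := by
  ext p q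
  rw [extMap_apply, extMap_apply, conjTranspose_kronecker, conjTranspose_one,
    submatrix_kronecker_one_mul_mul]
  rfl

namespace CompletelyPositive

variable {Φ : Matrix (Fin N) (Fin N) ℂ → Matrix (Fin N) (Fin N) ℂ}

lemma conjChan_comp (hΦ : CompletelyPositive N Φ) (U : Matrix (Fin N) (Fin N) ℂ) :
    CompletelyPositive N (conjChan N U ∘ Φ) := fun k A hA => by
  rw [extMap_conjChan_comp]
  exact (hΦ k A hA).mul_mul_conjTranspose_same _

lemma comp_conjChan (hΦ : CompletelyPositive N Φ) (U : Matrix (Fin N) (Fin N) ℂ) :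
    CompletelyPositive N (Φ ∘ conjChan N U) := fun k A hA => by
  rw [extMap_comp_conjChan]
  exact hΦ k _ (hA.mul_mul_conjTranspose_same _)

end CompletelyPositive

noncomputable def choiMatrix (Φ : Matrix (Fin N) (Fin N) ℂ → Matrix (Fin N) (Fin N) ℂ) :
    Matrix (Fin N × Fin N) (Fin N × Fin N) ℂ :=
  Matrix.of fun p q => Φ (single p.2 q.2 1) p.1 q.1

lemma choiMatrix_apply (Φ : Matrix (Fin N) (Fin N) ℂ → Matrix (Fin N) (Fin N) ℂ)
    (k i l j : Fin N) : choiMatrix Φ (k, i) (l, j) = Φ (single i j 1) k l :=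
  rfl

lemma CompletelyPositive.posSemidef_choiMatrix
    {Φ : Matrix (Fin N) (Fin N) ℂ → Matrix (Fin N) (Fin N) ℂ} (hΦ : CompletelyPositive N Φ) :
    (choiMatrix Φ).PosSemidef := by
  -- `ω` is the unnormalised maximally entangled vector, and the Choi matrix is `(Φ ⊗ id)(ωω†)`.
  let ω : Fin N × Fin N → ℂ := fun p => (1 : Matrix (Fin N) (Fin N) ℂ) p.1 p.2
  have hblock : ∀ s t, (vecMulVec ω (star ω)).submatrix (·, s) (·, t) = single s t 1 := by
    intro s t
    ext i j
    simp only [ω, submatrix_apply, vecMulVec_apply, Pi.star_apply, one_apply, single_apply]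
    split_ifs <;> simp_all
  have hchoi : choiMatrix Φ = extMap N N Φ (vecMulVec ω (star ω)) := by
    ext p q
    rw [extMap_apply, hblock]
    rfl
  rw [hchoi]
  exact hΦ N _ (posSemidef_vecMulVec_self_star ω)

lemma CompletelyPositive.apply_single_eq_smul_single
    {Φ : Matrix (Fin N) (Fin N) ℂ → Matrix (Fin N) (Fin N) ℂ} (hΦ : CompletelyPositive N Φ)
    (hdiag : ∀ i k, k ≠ i → Φ (single i i 1) k k = 0) (i j : Fin N) :
    Φ (single i j 1) = Φ (single i j 1) i j • single i j 1 := by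
  have hC := hΦ.posSemidef_choiMatrix
  ext k l
  by_cases hki : k = i
  · by_cases hlj : l = j
    · subst hki hlj
      simp
    · have := hC.apply_eq_zero_of_apply_self_eq_zero (i := (l, j)) (hdiag j l hlj) (k, i)
      rw [choiMatrix_apply] at this
      simp [this, Ne.symm hlj]
  · have := hC.apply_eq_zero_of_apply_self_eq_zero' (i := (k, i)) (hdiag i k hki) (l, j)
    rw [choiMatrix_apply] at this
    simp [this, Ne.symm hki]

lemma CompletelyPositive.apply_eq_hadamard
    {Φ : Matrix (Fin N) (Fin N) ℂ →ₗ[ℂ] Matrix (Fin N) (Fin N) ℂ} (hΦ : CompletelyPositive N Φ)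
    (hdiag : ∀ i k, k ≠ i → Φ (single i i 1) k k = 0) (X : Matrix (Fin N) (Fin N) ℂ) :
    Φ X = (Matrix.of fun i j => Φ (single i j 1) i j) ⊙ X := by
  conv_lhs => rw [matrix_eq_sum_single X]
  have hsingle : ∀ i j, Φ (single i j (X i j)) = single i j (Φ (single i j 1) i j * X i j) := by
    intro i j
    rw [← mul_one (X i j), ← smul_eq_mul, ← smul_single, map_smul,
      hΦ.apply_single_eq_smul_single hdiag, smul_single, smul_single]
    simp [mul_comm]
  simp only [map_sum, hsingle, sum_sum_single]
  rfl

lemma apply_single_self_apply_eq_zero_of_fixes_diagonal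
    (Φ : Matrix (Fin N) (Fin N) ℂ →ₗ[ℂ] Matrix (Fin N) (Fin N) ℂ) (hCP : CompletelyPositive N Φ)
    (hTP : ∀ X, (Φ X).trace = X.trace) (hunital : Φ 1 = 1) {lam : Fin N → ℝ}
    (hlam : Function.Injective lam)
    (hD : Φ (diagonal fun i => (lam i : ℂ)) = diagonal fun i => (lam i : ℂ))
    {i k : Fin N} (hki : k ≠ i) : Φ (single i i 1) k k = 0 := by
  have hnonneg : ∀ k i, 0 ≤ Φ (single i i 1) k k := fun k i =>
    hCP.posSemidef_choiMatrix.diag_nonneg (i := (k, i))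
  have hreal : ∀ k i, ((Φ (single i i 1) k k).re : ℂ) = Φ (single i i 1) k k := fun k i =>
    (Complex.eq_re_of_ofReal_le (by rw [Complex.ofReal_zero]; exact hnonneg k i)).symm
  have hdiagonal :
      ∀ (d : Fin N → ℂ) k, Φ (diagonal d) k k = ∑ i, d i * Φ (single i i 1) k k := by
    intro d k
    simp_rw [← sum_single_eq_diagonal, map_sum, Matrix.sum_apply]
    refine Finset.sum_congr rfl fun i _ => ?_
    rw [← mul_one (d i), ← smul_eq_mul, ← smul_single, map_smul]
    simp
  let P : Matrix (Fin N) (Fin N) ℝ := Matrix.of fun k i => (Φ (single i i 1) k k).re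
  have hrow : ∀ k, ∑ i, P k i = 1 := fun k => Complex.ofReal_injective <| by
    push_cast
    simp only [P, of_apply, hreal]
    simpa [hunital] using (hdiagonal 1 k).symm
  have hcol : ∀ i, ∑ k, P k i = 1 := fun i => Complex.ofReal_injective <| by
    push_cast
    simp only [P, of_apply, hreal]
    exact (hTP _).trans (trace_single_eq_same _ _)
  have hfix : P *ᵥ lam = lam := funext fun k => Complex.ofReal_injective <| by
    simp only [mulVec, dotProduct]
    push_cast
    simp only [P, of_apply, hreal, mul_comm _ (lam _ : ℂ)]
    rw [← hdiagonal, hD, diagonal_apply_eq]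
  have hP : P ∈ doublyStochastic ℝ (Fin N) :=
    mem_doublyStochastic_iff_sum.mpr
      ⟨fun k i => (Complex.nonneg_iff.mp (hnonneg k i)).1, hrow, hcol⟩
  rw [← hreal, show (Φ (single i i 1) k k).re = P k i from rfl,
    doublyStochastic_apply_eq_zero_of_mulVec_eq hP hfix (hlam.ne hki), Complex.ofReal_zero]

theorem eq_id_of_fixes_diagonal
    (Φ : Matrix (Fin N) (Fin N) ℂ →ₗ[ℂ] Matrix (Fin N) (Fin N) ℂ) (hCP : CompletelyPositive N Φ)
    (hTP : ∀ X, (Φ X).trace = X.trace) (hunital : Φ 1 = 1) {lam : Fin N → ℝ}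
    (hlam : Function.Injective lam)
    (hD : Φ (diagonal fun i => (lam i : ℂ)) = diagonal fun i => (lam i : ℂ))
    {R : Matrix (Fin N) (Fin N) ℂ} (hR : Φ R = R) (hR0 : ∀ i j, R i j ≠ 0) :
    Φ = LinearMap.id := by
  have hdiag : ∀ i k, k ≠ i → Φ (single i i 1) k k = 0 := fun i k hki =>
    apply_single_self_apply_eq_zero_of_fixes_diagonal Φ hCP hTP hunital hlam hD hki
  have hone : ∀ i j, Φ (single i j 1) i j = 1 := fun i j => by
    have hij := congrFun₂ (hCP.apply_eq_hadamard hdiag R) i j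
    rw [hR, hadamard_apply, of_apply] at hij
    exact (mul_eq_right₀ (hR0 i j)).mp hij.symm
  ext1 X
  rw [hCP.apply_eq_hadamard hdiag X]
  ext i j
  simp [hone]

lemma conjChan_conjChan (A B X : Matrix (Fin N) (Fin N) ℂ) :
    conjChan N A (conjChan N B X) = conjChan N (A * B) X := by
  simp only [conjChan_apply, conjTranspose_mul, Matrix.mul_assoc]

section Unitary

variable {U : Matrix (Fin N) (Fin N) ℂ} (hU : U ∈ unitaryGroup (Fin N) ℂ)
include hU

lemma conjChan_conjTranspose_conjChan (X : Matrix (Fin N) (Fin N) ℂ) :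
    conjChan N Uᴴ (conjChan N U X) = X := by
  rw [conjChan_conjChan, ← star_eq_conjTranspose, Unitary.star_mul_self_of_mem hU,
    conjChan_apply, conjTranspose_one, Matrix.one_mul, Matrix.mul_one]

lemma conjChan_conjChan_conjTranspose (X : Matrix (Fin N) (Fin N) ℂ) :
    conjChan N U (conjChan N Uᴴ X) = X := by
  rw [conjChan_conjChan, ← star_eq_conjTranspose, Unitary.mul_star_self_of_mem hU,
    conjChan_apply, conjTranspose_one, Matrix.one_mul, Matrix.mul_one]

lemma conjChan_one_of_mem_unitaryGroup : conjChan N U 1 = 1 := by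
  rw [conjChan_apply, Matrix.mul_one, ← star_eq_conjTranspose, Unitary.mul_star_self_of_mem hU]

lemma trace_conjChan_of_mem_unitaryGroup (X : Matrix (Fin N) (Fin N) ℂ) :
    (conjChan N U X).trace = X.trace := by
  rw [conjChan_apply, trace_mul_cycle, ← star_eq_conjTranspose, Unitary.star_mul_self_of_mem hU,
    Matrix.one_mul]

lemma eq_conjChan_of_conjChan_conjTranspose_comp_eq_id
    {Φ : Matrix (Fin N) (Fin N) ℂ →ₗ[ℂ] Matrix (Fin N) (Fin N) ℂ}
    (h : conjChan N Uᴴ ∘ₗ Φ = LinearMap.id) : Φ = conjChan N U :=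
  LinearMap.ext fun X => by
    simpa only [LinearMap.comp_apply, LinearMap.id_apply, conjChan_conjChan_conjTranspose hU] using
      congrArg (conjChan N U) (LinearMap.congr_fun h X)

end Unitary

section OrthonormalBasis

variable {φ : Fin N → Fin N → ℂ}

lemma transpose_of_orthonormal_mem_unitaryGroup
    (hφ : ∀ m n, star (φ m) ⬝ᵥ φ n = if m = n then 1 else 0) :
    (of φ)ᵀ ∈ unitaryGroup (Fin N) ℂ := by
  rw [mem_unitaryGroup_iff']
  ext m n
  simpa [mul_apply, one_apply, dotProduct] using hφ m n

lemma conjChan_transpose_of_diagonal (d : Fin N → ℂ) :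
    conjChan N (of φ)ᵀ (diagonal d) = ∑ n, d n • vecMulVec (φ n) (star (φ n)) := by
  ext i j
  simp [conjChan_apply, mul_apply, diagonal_apply, vecMulVec_apply, Matrix.sum_apply, mul_assoc]
  exact Finset.sum_congr rfl fun _ _ => mul_left_comm _ _ _

lemma conjChan_conjTranspose_transpose_of_apply (A : Matrix (Fin N) (Fin N) ℂ) (k l : Fin N) :
    conjChan N (of φ)ᵀᴴ A k l = star (φ k) ⬝ᵥ A *ᵥ φ l := by
  rw [conjChan_apply, conjTranspose_conjTranspose, mul_mul_apply]
  rfl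

end OrthonormalBasis

lemma matHSnormSq_nonneg (A : Matrix (Fin N) (Fin N) ℂ) : 0 ≤ matHSnormSq A :=
  Finset.sum_nonneg fun _ _ => Finset.sum_nonneg fun _ _ => Complex.normSq_nonneg _

lemma matHSnormSq_eq_zero_iff {A : Matrix (Fin N) (Fin N) ℂ} : matHSnormSq A = 0 ↔ A = 0 := by
  rw [matHSnormSq, Finset.sum_eq_zero_iff_of_nonneg fun a _ =>
    Finset.sum_nonneg fun b _ => Complex.normSq_nonneg (A a b)]
  simp only [Finset.mem_univ, forall_const, ← Matrix.ext_iff, Matrix.zero_apply]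
  refine forall_congr' fun a => ?_
  simp [Finset.sum_eq_zero_iff_of_nonneg fun b _ => Complex.normSq_nonneg (A a b)]

lemma matHSnormSq_add_add_eq_zero_iff {A B C : Matrix (Fin N) (Fin N) ℂ} :
    matHSnormSq A + matHSnormSq B + matHSnormSq C = 0 ↔ A = 0 ∧ B = 0 ∧ C = 0 := by
  rw [add_eq_zero_iff_of_nonneg (add_nonneg (matHSnormSq_nonneg _) (matHSnormSq_nonneg _))
      (matHSnormSq_nonneg _), add_eq_zero_iff_of_nonneg (matHSnormSq_nonneg _)
      (matHSnormSq_nonneg _), matHSnormSq_eq_zero_iff, matHSnormSq_eq_zero_iff,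
    matHSnormSq_eq_zero_iff, and_assoc]

theorem eq_id_of_fixes_of_orthonormal
    (Φ : Matrix (Fin N) (Fin N) ℂ →ₗ[ℂ] Matrix (Fin N) (Fin N) ℂ) (hCP : CompletelyPositive N Φ)
    (hTP : ∀ X, (Φ X).trace = X.trace) (hunital : Φ 1 = 1) {φ : Fin N → Fin N → ℂ}
    (hφ : ∀ m n, star (φ m) ⬝ᵥ φ n = if m = n then 1 else 0) {lam : Fin N → ℝ}
    (hlam : Function.Injective lam) {ρ₁ ρ₂ : Matrix (Fin N) (Fin N) ℂ}
    (hρ₁ : ρ₁ = ∑ n, (lam n : ℂ) • vecMulVec (φ n) (star (φ n)))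
    (hρ₂herm : ρ₂.IsHermitian) (hρ₂proj : ρ₂ * ρ₂ = ρ₂) (hρ₂rank : ρ₂.rank = 1)
    (hρ₂φ : ∀ n, ρ₂ *ᵥ φ n ≠ 0) (h₁ : Φ ρ₁ = ρ₁) (h₂ : Φ ρ₂ = ρ₂) :
    Φ = LinearMap.id := by
  set M := (of φ)ᵀ
  have hM : M ∈ unitaryGroup (Fin N) ℂ := transpose_of_orthonormal_mem_unitaryGroup hφ
  have hMH : Mᴴ ∈ unitaryGroup (Fin N) ℂ := Unitary.star_mem hM
  have hρ₁M : conjChan N M (diagonal fun n => (lam n : ℂ)) = ρ₁ := by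
    rw [hρ₁, conjChan_transpose_of_diagonal]
  set Ψ := conjChan N Mᴴ ∘ₗ Φ ∘ₗ conjChan N M
  have hΨ : Ψ = LinearMap.id := by
    refine eq_id_of_fixes_diagonal Ψ ((hCP.comp_conjChan M).conjChan_comp Mᴴ) (fun X => ?_) ?_
      hlam ?_ (R := conjChan N Mᴴ ρ₂) ?_ fun i j => ?_
    · simp only [Ψ, LinearMap.comp_apply, trace_conjChan_of_mem_unitaryGroup hMH, hTP,
        trace_conjChan_of_mem_unitaryGroup hM]
    · simp only [Ψ, LinearMap.comp_apply, conjChan_one_of_mem_unitaryGroup hM, hunital,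
        conjChan_one_of_mem_unitaryGroup hMH]
    · simp only [Ψ, LinearMap.comp_apply, hρ₁M, h₁]
      rw [← hρ₁M, conjChan_conjTranspose_conjChan hM]
    · simp only [Ψ, LinearMap.comp_apply, conjChan_conjChan_conjTranspose hM, h₂]
    · rw [conjChan_conjTranspose_transpose_of_apply]
      exact hρ₂herm.star_dotProduct_mulVec_ne_zero_of_rank_eq_one hρ₂proj hρ₂rank (hρ₂φ i) (hρ₂φ j)
  have hΦM : Φ ∘ₗ conjChan N M = conjChan N M :=
    eq_conjChan_of_conjChan_conjTranspose_comp_eq_id hM hΨ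
  ext1 X
  simpa only [LinearMap.comp_apply, LinearMap.id_apply, conjChan_conjChan_conjTranspose hM] using
    LinearMap.congr_fun hΦM (conjChan N Mᴴ X)

theorem stmt3_general (N : ℕ) (hN : 0 < N)
    (U : Matrix (Fin N) (Fin N) ℂ) (hU : U ∈ Matrix.unitaryGroup (Fin N) ℂ)
    (φ : Fin N → (Fin N → ℂ))
    (hφ : ∀ m n, star (φ m) ⬝ᵥ φ n = if m = n then 1 else 0)
    (lam : Fin N → ℝ) (hinj : Function.Injective lam)
    (ρ₁ : Matrix (Fin N) (Fin N) ℂ)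
    (hρ₁ : ρ₁ = ∑ n, (lam n : ℂ) • Matrix.vecMulVec (φ n) (star (φ n)))
    (ρ₂ : Matrix (Fin N) (Fin N) ℂ)
    (hρ₂herm : ρ₂.IsHermitian) (hρ₂proj : ρ₂ * ρ₂ = ρ₂) (hρ₂rank : ρ₂.rank = 1)
    (hρ₂φ : ∀ n, ρ₂ *ᵥ φ n ≠ 0)
    (ρ₃ : Matrix (Fin N) (Fin N) ℂ) (hρ₃ : ρ₃ = ((N : ℂ))⁻¹ • (1 : Matrix (Fin N) (Fin N) ℂ))
    (Φ : Matrix (Fin N) (Fin N) ℂ →ₗ[ℂ] Matrix (Fin N) (Fin N) ℂ)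
    (hTP : ∀ ρ, (Φ ρ).trace = ρ.trace)
    (hCP : CompletelyPositive N (⇑Φ)) :
    0 ≤ (1 / 6 : ℝ) * (matHSnormSq (Φ ρ₁ - U * ρ₁ * Uᴴ) + matHSnormSq (Φ ρ₂ - U * ρ₂ * Uᴴ) +
          matHSnormSq (Φ ρ₃ - U * ρ₃ * Uᴴ)) ∧
    ((1 / 6 : ℝ) * (matHSnormSq (Φ ρ₁ - U * ρ₁ * Uᴴ) + matHSnormSq (Φ ρ₂ - U * ρ₂ * Uᴴ) +
          matHSnormSq (Φ ρ₃ - U * ρ₃ * Uᴴ)) = 0 ↔ Φ = conjChan N U) := by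
  refine ⟨mul_nonneg (by norm_num) (add_nonneg (add_nonneg (matHSnormSq_nonneg _)
    (matHSnormSq_nonneg _)) (matHSnormSq_nonneg _)), ?_⟩
  simp only [mul_eq_zero, one_div, inv_eq_zero, OfNat.ofNat_ne_zero, false_or,
    matHSnormSq_add_add_eq_zero_iff, sub_eq_zero, ← conjChan_apply]
  refine ⟨fun ⟨h₁, h₂, h₃⟩ => ?_, fun h => by simp [h]⟩
  have hunital : Φ 1 = 1 := by
    rw [hρ₃, map_smul, map_smul, conjChan_one_of_mem_unitaryGroup hU] at h₃
    exact smul_right_injective _ (inv_ne_zero (Nat.cast_ne_zero.mpr hN.ne')) h₃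
  have hUH : Uᴴ ∈ unitaryGroup (Fin N) ℂ := Unitary.star_mem hU
  refine eq_conjChan_of_conjChan_conjTranspose_comp_eq_id hU <|
    eq_id_of_fixes_of_orthonormal (conjChan N Uᴴ ∘ₗ Φ) (hCP.conjChan_comp Uᴴ)
    (fun X => by rw [LinearMap.comp_apply, trace_conjChan_of_mem_unitaryGroup hUH, hTP])
    (by rw [LinearMap.comp_apply, hunital, conjChan_one_of_mem_unitaryGroup hUH])
    hφ hinj hρ₁ hρ₂herm hρ₂proj hρ₂rank hρ₂φ
    (by rw [LinearMap.comp_apply, h₁, conjChan_conjTranspose_conjChan hU])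
    (by rw [LinearMap.comp_apply, h₂, conjChan_conjTranspose_conjChan hU])

/-- With `ρ₁, ρ₂, ρ₃` as in the Goerz–Reich–Koch theorem, the functional
`J_U^{GRK,sd}(Φ) = (1/6) Σ_m ‖Φρ_m − Uρ_mU†‖²` is nonnegative on quantum channels and
vanishes iff `Φ = Φ_U`. -/
theorem stmt3 (N : ℕ) (hN : 0 < N)
    (U : Matrix (Fin N) (Fin N) ℂ) (hU : U ∈ Matrix.unitaryGroup (Fin N) ℂ)
    (φ : Fin N → (Fin N → ℂ))
    (hφ : ∀ m n, star (φ m) ⬝ᵥ φ n = if m = n then 1 else 0)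
    (lam : Fin N → ℝ) (hpos : ∀ n, 0 < lam n) (hinj : Function.Injective lam)
    (hsum : ∑ n, lam n = 1)
    (ρ₁ : Matrix (Fin N) (Fin N) ℂ)
    (hρ₁ : ρ₁ = ∑ n, (lam n : ℂ) • Matrix.vecMulVec (φ n) (star (φ n)))
    (ρ₂ : Matrix (Fin N) (Fin N) ℂ)
    (hρ₂herm : ρ₂.IsHermitian) (hρ₂proj : ρ₂ * ρ₂ = ρ₂) (hρ₂rank : ρ₂.rank = 1)
    (hρ₂φ : ∀ n, ρ₂ *ᵥ φ n ≠ 0)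
    (ρ₃ : Matrix (Fin N) (Fin N) ℂ) (hρ₃ : ρ₃ = ((N : ℂ))⁻¹ • (1 : Matrix (Fin N) (Fin N) ℂ))
    (Φ : Matrix (Fin N) (Fin N) ℂ →ₗ[ℂ] Matrix (Fin N) (Fin N) ℂ)
    (hTP : ∀ ρ, (Φ ρ).trace = ρ.trace)
    (hCP : CompletelyPositive N (⇑Φ)) :
    0 ≤ (1 / 6 : ℝ) * (matHSnormSq (Φ ρ₁ - U * ρ₁ * Uᴴ) + matHSnormSq (Φ ρ₂ - U * ρ₂ * Uᴴ) +
          matHSnormSq (Φ ρ₃ - U * ρ₃ * Uᴴ)) ∧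
    ((1 / 6 : ℝ) * (matHSnormSq (Φ ρ₁ - U * ρ₁ * Uᴴ) + matHSnormSq (Φ ρ₂ - U * ρ₂ * Uᴴ) +
          matHSnormSq (Φ ρ₃ - U * ρ₃ * Uᴴ)) = 0 ↔ Φ = conjChan N U) :=
  stmt3_general N hN U hU φ hφ lam hinj ρ₁ hρ₁ ρ₂ hρ₂herm hρ₂proj hρ₂rank hρ₂φ ρ₃ hρ₃ Φ hTP hCP
end

section
/- Let A, B be n×n matrices and Δ > 0. Then the derivative of the map u ↦ exp(Δ(A + uB)) at u = 0 equals Δ · ∫₀¹ exp((1−τ)ΔA) B exp(τΔA) dτ. -/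
open Matrix

attribute [local instance] Matrix.linftyOpNormedRing Matrix.linftyOpNormedAlgebra

/-!
Duhamel's formula: `s ↦ exp ((1 - s) X) exp (s Y)` has derivative `exp ((1 - s) X) (Y - X) exp (s Y)`,
so integrating over `[0, 1]` gives `exp Y - exp X = ∫₀¹ exp ((1 - s) X) (Y - X) exp (s Y) ds`.
For `Y = X + u V` the difference quotient of `u ↦ exp (X + u V)` at `0` is therefore
`∫₀¹ exp ((1 - s) X) V exp (s (X + u V)) ds`, which is continuous in `u`.
-/

open NormedSpace

section Duhamel

variable {𝔸 : Type*} [NormedRing 𝔸] [NormedAlgebra ℝ 𝔸] [CompleteSpace 𝔸]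

-- `exp_continuous` is stated for normed `ℚ`-algebras.
noncomputable local instance : NormedAlgebra ℚ 𝔸 := NormedAlgebra.restrictScalars ℚ ℝ 𝔸

theorem hasDerivAt_exp_one_sub_smul_mul_exp_smul (X Y : 𝔸) (s : ℝ) :
    HasDerivAt (fun s : ℝ => exp ((1 - s) • X) * exp (s • Y))
      (exp ((1 - s) • X) * (Y - X) * exp (s • Y)) s := by
  have hX : HasDerivAt (fun s : ℝ => exp ((1 - s) • X)) (-(exp ((1 - s) • X) * X)) s := by
    simpa [Function.comp_def] using
      (hasDerivAt_exp_smul_const X (1 - s)).scomp s ((hasDerivAt_id s).const_sub 1)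
  refine (hX.mul (hasDerivAt_exp_smul_const' Y s)).congr_deriv ?_
  noncomm_ring

theorem exp_sub_exp_eq_integral (X Y : 𝔸) :
    exp Y - exp X = ∫ s in (0 : ℝ)..1, exp ((1 - s) • X) * (Y - X) * exp (s • Y) := by
  rw [intervalIntegral.integral_eq_sub_of_hasDerivAt
    (fun s _ => hasDerivAt_exp_one_sub_smul_mul_exp_smul X Y s)
    (Continuous.intervalIntegrable (by fun_prop) 0 1)]
  simp

theorem hasDerivAt_exp_add_smul (X V : 𝔸) :
    HasDerivAt (fun u : ℝ => exp (X + u • V))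
      (∫ s in (0 : ℝ)..1, exp ((1 - s) • X) * V * exp (s • X)) 0 := by
  have hF : Continuous fun u : ℝ =>
      ∫ s in (0 : ℝ)..1, exp ((1 - s) • X) * V * exp (s • (X + u • V)) :=
    intervalIntegral.continuous_parametric_intervalIntegral_of_continuous' (by fun_prop) 0 1
  have hF0 := hF.tendsto 0
  simp only [zero_smul, add_zero] at hF0
  rw [hasDerivAt_iff_tendsto_slope_zero]
  refine (hF0.mono_left nhdsWithin_le_nhds).congr' ?_
  filter_upwards [self_mem_nhdsWithin] with u (hu : u ≠ 0)
  rw [zero_add, zero_smul, add_zero, exp_sub_exp_eq_integral, add_sub_cancel_left,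
    ← intervalIntegral.integral_smul]
  refine intervalIntegral.integral_congr fun s _ => ?_
  simp only [mul_smul_comm, smul_mul_assoc, smul_smul, inv_mul_cancel₀ hu, one_smul]

end Duhamel

theorem stmt15_general (n : ℕ) (A B : Matrix (Fin n) (Fin n) ℂ) (Δ : ℝ) :
    HasDerivAt (fun u : ℝ => NormedSpace.exp (Δ • (A + u • B)))
      (Δ • ∫ τ in (0:ℝ)..(1:ℝ),
        NormedSpace.exp (((1 - τ) * Δ) • A) * B * NormedSpace.exp ((τ * Δ) • A))
      0 := by
  simp only [smul_add, smul_comm Δ (_ : ℝ) B]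
  refine (hasDerivAt_exp_add_smul (Δ • A) (Δ • B)).congr_deriv ?_
  rw [← intervalIntegral.integral_smul]
  refine intervalIntegral.integral_congr fun s _ => ?_
  simp only [smul_smul, mul_smul_comm, smul_mul_assoc]
  rfl

/-- The derivative of `u ↦ exp(Δ(A + uB))` at `u = 0` is
`Δ·∫₀¹ exp((1−τ)ΔA) B exp(τΔA) dτ`. -/
theorem stmt15 (n : ℕ) (A B : Matrix (Fin n) (Fin n) ℂ) (Δ : ℝ) (hΔ : 0 < Δ) :
    HasDerivAt (fun u : ℝ => NormedSpace.exp (Δ • (A + u • B)))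
      (Δ • ∫ τ in (0:ℝ)..(1:ℝ),
        NormedSpace.exp (((1 - τ) * Δ) • A) * B * NormedSpace.exp ((τ * Δ) • A))
      0 :=
  stmt15_general n A B Δ
end
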